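/- Let f : ℝ³ → ℝ be convex, nondecreasing in each coordinate, and invariant under permutations of its arguments. Let F₁, F₂ be real 3×3 matrices, t ∈ [0,1], and set F = tF₁ + (1−t)F₂. Denote by λ, λ¹, λ² ∈ ℝ³ the vectors of decreasingly ordered singular values of F, F₁, F₂ respectively. Then f(λ) ≤ f(t·λ¹ + (1−t)·λ²). -/

import Mathlib

open Matrix Finset

/-- The decreasingly ordered singular values of a real 3×3 matrix:
`singularValues F 0 ≥ singularValues F 1 ≥ singularValues F 2` are the square roots of the
eigenvalues of the symmetric positive semidefinite matrix `Fᵀ F`. -/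
noncomputable def singularValues (F : Matrix (Fin 3) (Fin 3) ℝ) : Fin 3 → ℝ := fun k =>
  Real.sqrt
    (((Matrix.isHermitian_conjTranspose_mul_self F).eigenvalues ∘
      Tuple.sort (Matrix.isHermitian_conjTranspose_mul_self F).eigenvalues) k.rev)

lemma dp_sum {ι : Type*} (v : Fin 3 → ℝ) (s : Finset ι) (w : ι → (Fin 3 → ℝ)) :
    v ⬝ᵥ (∑ i ∈ s, w i) = ∑ i ∈ s, v ⬝ᵥ w i := by
  classical
  refine Finset.induction_on s (by simp) ?_
  intro a s ha ih
  simp [Finset.sum_insert ha, dotProduct_add, ih]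

lemma sum_dp {ι : Type*} (v : Fin 3 → ℝ) (s : Finset ι) (w : ι → (Fin 3 → ℝ)) :
    (∑ i ∈ s, w i) ⬝ᵥ v = ∑ i ∈ s, w i ⬝ᵥ v := by
  classical
  refine Finset.induction_on s (by simp) ?_
  intro a s ha ih
  simp [Finset.sum_insert ha, add_dotProduct, ih]

lemma bessel3 (w : Fin 3 → Fin 3 → ℝ) (S : Finset (Fin 3))
    (h1 : ∀ i ∈ S, w i ⬝ᵥ w i ≤ 1)
    (h0 : ∀ i ∈ S, ∀ l ∈ S, i ≠ l → w i ⬝ᵥ w l = 0) (x : Fin 3 → ℝ) :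
    ∑ i ∈ S, (w i ⬝ᵥ x) ^ 2 ≤ x ⬝ᵥ x := by
  set c : Fin 3 → ℝ := fun i => w i ⬝ᵥ x with hc
  set y : Fin 3 → ℝ := x - ∑ i ∈ S, c i • w i with hy
  have hyy : 0 ≤ y ⬝ᵥ y := Finset.sum_nonneg fun k _ => mul_self_nonneg _
  have hexp : y ⬝ᵥ y = x ⬝ᵥ x - 2 * ∑ i ∈ S, c i ^ 2
      + ∑ i ∈ S, c i ^ 2 * (w i ⬝ᵥ w i) := by
    rw [hy, sub_dotProduct, dotProduct_sub, dotProduct_sub,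
      dp_sum, sum_dp, sum_dp]
    have e1 : ∀ i ∈ S, x ⬝ᵥ (c i • w i) = c i ^ 2 := by
      intro i hi
      rw [dotProduct_smul, dotProduct_comm]
      simp only [smul_eq_mul, hc]; ring
    have e2 : ∀ i ∈ S, (c i • w i) ⬝ᵥ x = c i ^ 2 := by
      intro i hi
      rw [smul_dotProduct]
      simp only [smul_eq_mul, hc]; ring
    have e3 : ∀ i ∈ S, (c i • w i) ⬝ᵥ (∑ l ∈ S, c l • w l) = c i ^ 2 * (w i ⬝ᵥ w i) := by
      intro i hi
      rw [dp_sum, Finset.sum_eq_single_of_mem i hi]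
      · rw [smul_dotProduct, dotProduct_smul]; simp only [smul_eq_mul]; ring
      · intro l hl hne
        rw [smul_dotProduct, dotProduct_smul, h0 i hi l hl (Ne.symm hne)]
        simp
    rw [Finset.sum_congr rfl e1, Finset.sum_congr rfl e2, Finset.sum_congr rfl e3]
    ring
  have hD : ∑ i ∈ S, c i ^ 2 * (w i ⬝ᵥ w i) ≤ ∑ i ∈ S, c i ^ 2 := by
    apply Finset.sum_le_sum
    intro i hi
    nlinarith [sq_nonneg (c i), h1 i hi]
  have := hexp ▸ hyy
  have goal : ∑ i ∈ S, c i ^ 2 ≤ x ⬝ᵥ x := by linarith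
  simpa [hc] using goal

lemma mulVec_sum' {ι : Type*} (M : Matrix (Fin 3) (Fin 3) ℝ) (s : Finset ι)
    (w : ι → (Fin 3 → ℝ)) :
    M *ᵥ (∑ i ∈ s, w i) = ∑ i ∈ s, M *ᵥ w i := by
  classical
  refine Finset.induction_on s (by simp) ?_
  intro a s ha ih
  simp [Finset.sum_insert ha, Matrix.mulVec_add, ih]

lemma onb_expansion (q : Fin 3 → Fin 3 → ℝ)
    (hq : ∀ j l, q j ⬝ᵥ q l = if j = l then 1 else 0) (x : Fin 3 → ℝ) :
    ∑ j : Fin 3, (q j ⬝ᵥ x) • q j = x := by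
  set Q : Matrix (Fin 3) (Fin 3) ℝ := Matrix.of q with hQ
  have hQQ : Q * Qᵀ = 1 := by
    ext j l
    simp only [Matrix.mul_apply, Matrix.transpose_apply, hQ, Matrix.of_apply]
    simpa [dotProduct, Matrix.one_apply] using hq j l
  have hQQ' : Qᵀ * Q = 1 := mul_eq_one_comm.mp hQQ
  funext m
  have : (Qᵀ * Q) *ᵥ x = x := by rw [hQQ', Matrix.one_mulVec]
  calc (∑ j : Fin 3, (q j ⬝ᵥ x) • q j) m
      = ∑ j : Fin 3, (∑ k : Fin 3, q j k * x k) * q j m := by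
        simp [dotProduct, Finset.sum_apply]
    _ = ((Qᵀ * Q) *ᵥ x) m := by
        simp only [Matrix.mulVec, Matrix.mul_apply, dotProduct, Matrix.transpose_apply,
          hQ, Matrix.of_apply, Finset.sum_mul, Finset.mul_sum]
        rw [Finset.sum_comm]
        apply Finset.sum_congr rfl; intro j _
        apply Finset.sum_congr rfl; intro k _
        ring
    _ = x m := by rw [this]

lemma kyfan (M : Matrix (Fin 3) (Fin 3) ℝ) (s : Fin 3 → ℝ) (p q u v : Fin 3 → Fin 3 → ℝ)
    (hs : Antitone s) (hs0 : ∀ j, 0 ≤ s j)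
    (hq : ∀ j l, q j ⬝ᵥ q l = if j = l then 1 else 0)
    (hp1 : ∀ j, p j ⬝ᵥ p j ≤ 1) (hp0 : ∀ j l, j ≠ l → p j ⬝ᵥ p l = 0)
    (hM : ∀ j, M *ᵥ q j = s j • p j)
    (hu1 : ∀ i, u i ⬝ᵥ u i ≤ 1) (hu0 : ∀ i l, i ≠ l → u i ⬝ᵥ u l = 0)
    (hv1 : ∀ i, v i ⬝ᵥ v i ≤ 1) (hv0 : ∀ i l, i ≠ l → v i ⬝ᵥ v l = 0)
    (T : Finset (Fin 3)) :
    ∑ i ∈ T, u i ⬝ᵥ (M *ᵥ v i) ≤ ∑ j : Fin 3, (if (j : ℕ) < T.card then s j else 0) := by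
  classical
  set a : Fin 3 → Fin 3 → ℝ := fun i j => u i ⬝ᵥ p j with ha
  set b : Fin 3 → Fin 3 → ℝ := fun i j => q j ⬝ᵥ v i with hb
  set d : Fin 3 → ℝ := fun j => ∑ i ∈ T, a i j * b i j with hd
  -- expand each term
  have hterm : ∀ i, u i ⬝ᵥ (M *ᵥ v i) = ∑ j : Fin 3, s j * (a i j * b i j) := by
    intro i
    have hv' : v i = ∑ j : Fin 3, b i j • q j := (onb_expansion q hq (v i)).symm
    have : M *ᵥ v i = ∑ j : Fin 3, b i j • (s j • p j) := by
      conv_lhs => rw [hv']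
      rw [mulVec_sum']
      exact Finset.sum_congr rfl fun j _ => by rw [Matrix.mulVec_smul, hM j]
    rw [this, dp_sum]
    apply Finset.sum_congr rfl; intro j _
    rw [smul_smul, dotProduct_smul]
    simp only [smul_eq_mul, ha]
    ring
  have hLHS : ∑ i ∈ T, u i ⬝ᵥ (M *ᵥ v i) = ∑ j : Fin 3, s j * d j := by
    rw [Finset.sum_congr rfl fun i _ => hterm i, Finset.sum_comm]
    simp [hd, Finset.mul_sum]
  -- bound d j ≤ 1
  have hd1 : ∀ j, d j ≤ 1 := by
    intro j
    have hA : ∑ i ∈ T, a i j ^ 2 ≤ 1 := by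
      have := bessel3 u T (fun i _ => hu1 i) (fun i _ l _ h => hu0 i l h) (p j)
      exact this.trans (hp1 j)
    have hB : ∑ i ∈ T, b i j ^ 2 ≤ 1 := by
      have h2 := bessel3 v T (fun i _ => hv1 i) (fun i _ l _ h => hv0 i l h) (q j)
      have : ∑ i ∈ T, b i j ^ 2 = ∑ i ∈ T, (v i ⬝ᵥ q j) ^ 2 := by
        apply Finset.sum_congr rfl; intro i _
        rw [hb]; simp only; rw [dotProduct_comm]
      rw [this]
      have hqq := hq j j
      rw [if_pos rfl] at hqq
      exact h2.trans hqq.le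
    have : d j ≤ ∑ i ∈ T, (a i j ^ 2 + b i j ^ 2) / 2 := by
      apply Finset.sum_le_sum; intro i _
      nlinarith [sq_nonneg (a i j - b i j)]
    calc d j ≤ _ := this
      _ ≤ 1 := by
        rw [show (∑ i ∈ T, (a i j ^ 2 + b i j ^ 2) / 2) = ((∑ i ∈ T, a i j ^ 2) + ∑ i ∈ T, b i j ^ 2)/2 by
          rw [← Finset.sum_add_distrib, Finset.sum_div]]
        linarith
  -- subset sums of d bounded by card T
  have hdS : ∀ S : Finset (Fin 3), ∑ j ∈ S, d j ≤ (T.card : ℝ) := by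
    intro S
    have hA : ∀ i ∈ T, ∑ j ∈ S, a i j ^ 2 ≤ 1 := by
      intro i _
      have h2 := bessel3 p S (fun j _ => hp1 j) (fun j _ l _ h => hp0 j l h) (u i)
      have e : ∑ j ∈ S, a i j ^ 2 = ∑ j ∈ S, (p j ⬝ᵥ u i) ^ 2 := by
        apply Finset.sum_congr rfl; intro j _
        rw [ha]; simp only; rw [dotProduct_comm]
      rw [e]; exact h2.trans (hu1 i)
    have hB : ∀ i ∈ T, ∑ j ∈ S, b i j ^ 2 ≤ 1 := by
      intro i _
      have h2 := bessel3 q S (fun j _ => le_of_eq (by simpa using hq j j)) 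
        (fun j _ l _ h => by simpa [h] using hq j l) (v i)
      exact h2.trans (hv1 i)
    calc ∑ j ∈ S, d j = ∑ i ∈ T, ∑ j ∈ S, a i j * b i j := by
          rw [hd]; exact Finset.sum_comm
      _ ≤ ∑ i ∈ T, 1 := by
          apply Finset.sum_le_sum; intro i hi
          have : ∑ j ∈ S, a i j * b i j ≤ ∑ j ∈ S, (a i j ^ 2 + b i j ^ 2) / 2 := by
            apply Finset.sum_le_sum; intro j _
            nlinarith [sq_nonneg (a i j - b i j)]
          refine this.trans ?_
          rw [show (∑ j ∈ S, (a i j ^ 2 + b i j ^ 2) / 2) = ((∑ j ∈ S, a i j ^ 2) + ∑ j ∈ S, b i j ^ 2)/2 by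
            rw [← Finset.sum_add_distrib, Finset.sum_div]]
          linarith [hA i hi, hB i hi]
      _ = (T.card : ℝ) := by simp
  -- final arithmetic
  rw [hLHS]
  have hk3 : T.card ≤ 3 := by
    have := Finset.card_le_card (Finset.subset_univ T)
    simpa using this
  have h01 : s 1 ≤ s 0 := hs (by decide)
  have h12 : s 2 ≤ s 1 := hs (by decide)
  have h2 : (0:ℝ) ≤ s 2 := hs0 2
  have e0 : d 0 ≤ 1 := hd1 0
  have e1 : d 1 ≤ 1 := hd1 1
  have e2 : d 2 ≤ 1 := hd1 2
  have f0 : d 0 ≤ (T.card : ℝ) := by simpa using hdS {0}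
  have f01 : d 0 + d 1 ≤ (T.card : ℝ) := by simpa using hdS {0, 1}
  have f012 : d 0 + d 1 + d 2 ≤ (T.card : ℝ) := by
    have := hdS {0, 1, 2}
    rw [show ({0,1,2} : Finset (Fin 3)) = Finset.univ by decide] at this
    simpa [Fin.sum_univ_three] using this
  rw [Fin.sum_univ_three, Fin.sum_univ_three]
  interval_cases h : T.card
  · simp only [Nat.cast_zero] at f0 f01 f012
    simp only [show ¬((0:Fin 3):ℕ) < 0 by decide, show ¬((1:Fin 3):ℕ) < 0 by decide,
      show ¬((2:Fin 3):ℕ) < 0 by decide, if_false]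
    nlinarith [mul_nonneg (sub_nonneg.2 h01) (sub_nonneg.2 f0),
      mul_nonneg (sub_nonneg.2 h12) (sub_nonneg.2 f01), mul_nonneg h2 (sub_nonneg.2 f012)]
  · simp only [Nat.cast_one] at f0 f01 f012
    norm_num
    nlinarith [mul_nonneg (sub_nonneg.2 h01) (sub_nonneg.2 f0),
      mul_nonneg (sub_nonneg.2 h12) (sub_nonneg.2 f01), mul_nonneg h2 (sub_nonneg.2 f012)]
  · simp only [Nat.cast_ofNat] at f0 f01 f012
    norm_num
    nlinarith [mul_nonneg (sub_nonneg.2 h01) (sub_nonneg.2 e0),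
      mul_nonneg (sub_nonneg.2 h12) (sub_nonneg.2 f01), mul_nonneg h2 (sub_nonneg.2 f012)]
  · norm_num at f0 f01 f012 ⊢
    nlinarith [mul_nonneg (sub_nonneg.2 h01) (sub_nonneg.2 e0),
      mul_nonneg (sub_nonneg.2 h12) (sub_nonneg.2 (by linarith : d 0 + d 1 ≤ (2:ℝ))),
      mul_nonneg h2 (sub_nonneg.2 f012)]

lemma sv_nonneg (F : Matrix (Fin 3) (Fin 3) ℝ) (k : Fin 3) : 0 ≤ singularValues F k :=
  Real.sqrt_nonneg _

lemma sv_antitone (F : Matrix (Fin 3) (Fin 3) ℝ) : Antitone (singularValues F) := by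
  intro k l hkl
  apply Real.sqrt_le_sqrt
  exact Tuple.monotone_sort _ (by simpa [Fin.rev_le_rev] using hkl)

lemma dp_FtF (F : Matrix (Fin 3) (Fin 3) ℝ) (x y : Fin 3 → ℝ) :
    (F *ᵥ x) ⬝ᵥ (F *ᵥ y) = x ⬝ᵥ ((Fᴴ * F) *ᵥ y) := by
  have : x ⬝ᵥ ((Fᴴ * F) *ᵥ y) = (F *ᵥ x) ⬝ᵥ (F *ᵥ y) := by
    rw [Matrix.conjTranspose_eq_transpose_of_trivial, ← Matrix.mulVec_mulVec,
      Matrix.dotProduct_mulVec, Matrix.vecMul_transpose]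
  exact this.symm

lemma sv_sq (F : Matrix (Fin 3) (Fin 3) ℝ) (k : Fin 3) :
    singularValues F k ^ 2 =
      (Matrix.isHermitian_conjTranspose_mul_self F).eigenvalues
        (Tuple.sort (Matrix.isHermitian_conjTranspose_mul_self F).eigenvalues k.rev) := by
  apply Real.sq_sqrt
  exact (Matrix.posSemidef_conjTranspose_mul_self F).eigenvalues_nonneg _

lemma svd_data (F : Matrix (Fin 3) (Fin 3) ℝ) :
    ∃ p q : Fin 3 → Fin 3 → ℝ,
      (∀ j l, q j ⬝ᵥ q l = if j = l then 1 else 0) ∧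
      (∀ j, p j ⬝ᵥ p j ≤ 1) ∧ (∀ j l, j ≠ l → p j ⬝ᵥ p l = 0) ∧
      (∀ j, F *ᵥ q j = singularValues F j • p j) ∧
      (∀ j, p j ⬝ᵥ (F *ᵥ q j) = singularValues F j) := by
  classical
  have hH := Matrix.isHermitian_conjTranspose_mul_self F
  set ev := hH.eigenvalues with hev
  set τ := Tuple.sort ev with hτ
  let q : Fin 3 → Fin 3 → ℝ := fun k => ⇑(hH.eigenvectorBasis (τ k.rev))
  let sv := singularValues F
  have hinner : ∀ x y : EuclideanSpace ℝ (Fin 3),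
      (inner ℝ x y : ℝ) = (x : Fin 3 → ℝ) ⬝ᵥ (y : Fin 3 → ℝ) := by
    intro x y
    rw [PiLp.inner_apply]
    simp [dotProduct, RCLike.inner_apply, mul_comm]
  have hq : ∀ j l, q j ⬝ᵥ q l = if j = l then 1 else 0 := by
    intro j l
    have horth := hH.eigenvectorBasis.orthonormal
    rw [orthonormal_iff_ite] at horth
    have h2 := horth (τ j.rev) (τ l.rev)
    rw [hinner] at h2
    have h3 : q j ⬝ᵥ q l = if τ j.rev = τ l.rev then 1 else 0 := h2
    rw [h3]
    simp [τ.injective.eq_iff, Fin.rev_inj]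
  have hHq : ∀ k, (Fᴴ * F) *ᵥ q k = (sv k ^ 2) • q k := by
    intro k
    have h1 := hH.mulVec_eigenvectorBasis (τ k.rev)
    have h2 : (Fᴴ * F) *ᵥ q k = ev (τ k.rev) • q k := h1
    rw [h2, sv_sq]
  let r : Fin 3 → Fin 3 → ℝ := fun k => F *ᵥ q k
  have hrr : ∀ j l, r j ⬝ᵥ r l = (sv l ^ 2) * (if j = l then 1 else 0) := by
    intro j l
    show (F *ᵥ q j) ⬝ᵥ (F *ᵥ q l) = _
    rw [dp_FtF, hHq l, dotProduct_smul, hq j l]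
    simp [smul_eq_mul]
  let p : Fin 3 → Fin 3 → ℝ := fun k => if sv k = 0 then 0 else (sv k)⁻¹ • r k
  have hpj : ∀ k, p k = if sv k = 0 then 0 else (sv k)⁻¹ • r k := fun k => rfl
  have hr0 : ∀ k, sv k = 0 → r k = 0 := by
    intro k hk
    have h := hrr k k
    rw [if_pos rfl, hk] at h
    have h0 : r k ⬝ᵥ r k = 0 := by rw [h]; ring
    have hsum : ∑ i, r k i * r k i = 0 := h0
    funext m
    rw [Pi.zero_apply]
    exact mul_self_eq_zero.mp
      ((Finset.sum_eq_zero_iff_of_nonneg (fun i _ => mul_self_nonneg (r k i))).mp hsum m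
        (Finset.mem_univ m))
  have hFq : ∀ j, F *ᵥ q j = sv j • p j := by
    intro j
    rw [hpj j]
    by_cases h : sv j = 0
    · rw [if_pos h, smul_zero]
      exact hr0 j h
    · rw [if_neg h, smul_smul, mul_inv_cancel₀ h, one_smul]
  have hp1 : ∀ j, p j ⬝ᵥ p j ≤ 1 := by
    intro j
    rw [hpj j]
    by_cases h : sv j = 0
    · simp [if_pos h]
    · rw [if_neg h, smul_dotProduct, dotProduct_smul, hrr j j, if_pos rfl,
        smul_eq_mul, smul_eq_mul]
      have : (sv j)⁻¹ * ((sv j)⁻¹ * (sv j ^ 2 * 1)) = 1 := by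
        field_simp
      rw [this]
  have hp0 : ∀ j l, j ≠ l → p j ⬝ᵥ p l = 0 := by
    intro j l hne
    rw [hpj j, hpj l]
    by_cases h1 : sv j = 0
    · simp [if_pos h1]
    by_cases h2 : sv l = 0
    · simp [if_neg h1, if_pos h2]
    rw [if_neg h1, if_neg h2, smul_dotProduct, dotProduct_smul, hrr j l,
      if_neg hne]
    simp
  have hach : ∀ j, p j ⬝ᵥ (F *ᵥ q j) = sv j := by
    intro j
    rw [hFq j, dotProduct_smul, smul_eq_mul]
    by_cases h : sv j = 0
    · rw [h]; ring
    · have hpp : p j ⬝ᵥ p j = 1 := by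
        rw [hpj j, if_neg h, smul_dotProduct, dotProduct_smul, hrr j j,
          if_pos rfl, smul_eq_mul, smul_eq_mul]
        field_simp
      rw [hpp, mul_one]
  exact ⟨p, q, hq, hp1, hp0, hFq, hach⟩

lemma exists_subgradient (f : (Fin 3 → ℝ) → ℝ) (hconv : ConvexOn ℝ Set.univ f)
    (x₀ : Fin 3 → ℝ) :
    ∃ g : Fin 3 → ℝ, ∀ y, f x₀ + g ⬝ᵥ (y - x₀) ≤ f y := by
  classical
  have hcont : Continuous f := by
    rw [← continuousOn_univ]
    exact hconv.continuousOn isOpen_univ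
  set S : Set ((Fin 3 → ℝ) × ℝ) := {p | f p.1 < p.2} with hS
  have hSopen : IsOpen S := isOpen_lt (hcont.comp continuous_fst) continuous_snd
  have hSconv : Convex ℝ S := by
    intro pp hp qq hq a b ha hb hab
    simp only [hS, Set.mem_setOf_eq] at hp hq ⊢
    have hf := hconv.2 (Set.mem_univ pp.1) (Set.mem_univ qq.1) ha hb hab
    have h2 : a • f pp.1 + b • f qq.1 < a * pp.2 + b * qq.2 := by
      rcases eq_or_lt_of_le ha with h | h
      · have hb1 : b = 1 := by linarith
        simp [← h, hb1, hq]
      · have h1 : a * f pp.1 < a * pp.2 := by exact (mul_lt_mul_iff_right₀ h).2 hp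
        have h2 : b * f qq.1 ≤ b * qq.2 := mul_le_mul_of_nonneg_left hq.le hb
        simp only [smul_eq_mul]
        linarith
    calc f (a • pp + b • qq).1 = f (a • pp.1 + b • qq.1) := rfl
      _ ≤ a • f pp.1 + b • f qq.1 := hf
      _ < a * pp.2 + b * qq.2 := h2
      _ = (a • pp + b • qq).2 := rfl
  have hxS : (x₀, f x₀) ∉ S := by simp [hS]
  obtain ⟨φ, hφ⟩ := geometric_hahn_banach_open_point hSconv hSopen hxS
  set c : ℝ := φ (0, 1) with hc
  set ψ : (Fin 3 → ℝ) → ℝ := fun y => φ (y, 0) with hψ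
  have hφsplit : ∀ y r, φ (y, r) = ψ y + r * c := by
    intro y r
    have : (y, r) = (y, (0:ℝ)) + r • ((0 : Fin 3 → ℝ), (1:ℝ)) := by
      simp [Prod.ext_iff]
    rw [this, map_add, _root_.map_smul]
    simp [hψ, hc, smul_eq_mul]
  have hmain : ∀ y r, f y < r → ψ y + r * c < ψ x₀ + f x₀ * c := by
    intro y r hyr
    have := hφ (y, r) (by simpa [hS] using hyr)
    rwa [hφsplit, hφsplit] at this
  have hcneg : c < 0 := by
    have := hmain x₀ (f x₀ + 1) (by linarith)
    nlinarith
  have key : ∀ y, ψ y + f y * c ≤ ψ x₀ + f x₀ * c := by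
    intro y
    by_contra hcon
    push_neg at hcon
    set A := ψ x₀ + f x₀ * c with hA
    set B := ψ y + f y * c with hB
    have hBA : A < B := hcon
    have hδ : 0 < (A - B) / c := div_pos_iff.2 (Or.inr ⟨by linarith, hcneg⟩)
    have h2 := hmain y (f y + (A - B) / c) (by linarith)
    have h3 : (A - B) / c * c = A - B := div_mul_cancel₀ _ (ne_of_lt hcneg)
    have h4 : ψ y + (f y + (A - B) / c) * c = B + (A - B) := by
      rw [add_mul, h3, hB]; ring
    rw [h4] at h2
    linarith
  set g : Fin 3 → ℝ := fun i => -(ψ (Pi.single i 1)) / c with hg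
  refine ⟨g, fun y => ?_⟩
  have hlin : ∀ z : Fin 3 → ℝ, ψ z = ∑ i, z i * ψ (Pi.single i 1) := by
    intro z
    have hz : z = ∑ i, z i • (Pi.single i 1 : Fin 3 → ℝ) := by
      funext m
      simp [Finset.sum_apply, Pi.single_apply]
    calc ψ z = φ (z, 0) := rfl
      _ = ∑ i, z i * ψ (Pi.single i 1) := by
          conv_lhs => rw [hz]
          have : ((∑ i, z i • (Pi.single i 1 : Fin 3 → ℝ)), (0:ℝ))
              = ∑ i : Fin 3, z i • ((Pi.single i 1 : Fin 3 → ℝ), (0:ℝ)) := by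
            rw [Prod.ext_iff]
            constructor
            · simp [Prod.fst_sum]
            · simp [Prod.snd_sum]
          rw [this, map_sum]
          apply Finset.sum_congr rfl
          intro i _
          rw [_root_.map_smul]
          simp [hψ, smul_eq_mul]
  have hdot : g ⬝ᵥ (y - x₀) = (ψ x₀ - ψ y) / c := by
    rw [hlin, hlin]
    simp only [dotProduct, hg, Pi.sub_apply]
    rw [← Finset.sum_sub_distrib, Finset.sum_div]
    refine Finset.sum_congr rfl fun i _ => ?_
    field_simp
    ring
  have hk := key y
  have h5 : (ψ x₀ - ψ y) / c ≤ f y - f x₀ := by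
    rw [div_le_iff_of_neg hcneg]
    nlinarith [hk]
  rw [hdot]
  linarith

lemma weighted_vonNeumann (M : Matrix (Fin 3) (Fin 3) ℝ) (u v : Fin 3 → Fin 3 → ℝ)
    (hu1 : ∀ i, u i ⬝ᵥ u i ≤ 1) (hu0 : ∀ i l, i ≠ l → u i ⬝ᵥ u l = 0)
    (hv1 : ∀ i, v i ⬝ᵥ v i ≤ 1) (hv0 : ∀ i l, i ≠ l → v i ⬝ᵥ v l = 0)
    (g : Fin 3 → ℝ) (hganti : Antitone g) (hgnn : ∀ i, 0 ≤ g i) :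
    ∑ i : Fin 3, g i * (u i ⬝ᵥ (M *ᵥ v i)) ≤ ∑ i : Fin 3, g i * singularValues M i := by
  obtain ⟨p, q, hq, hp1, hp0, hMq, _⟩ := svd_data M
  have hK := fun T => kyfan M (singularValues M) p q u v (sv_antitone M) (sv_nonneg M)
    hq hp1 hp0 hMq hu1 hu0 hv1 hv0 T
  set S := singularValues M with hS
  have R1 : (∑ j : Fin 3, if (j : ℕ) < 1 then S j else 0) = S 0 := by
    rw [Fin.sum_univ_three]; norm_num
  have R2 : (∑ j : Fin 3, if (j : ℕ) < 2 then S j else 0) = S 0 + S 1 := by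
    rw [Fin.sum_univ_three]; norm_num
  have R3 : (∑ j : Fin 3, if (j : ℕ) < 3 then S j else 0) = S 0 + S 1 + S 2 := by
    rw [Fin.sum_univ_three]; norm_num
  have K1 : u 0 ⬝ᵥ (M *ᵥ v 0) ≤ S 0 := by
    have h := hK {0}
    rw [show ({0} : Finset (Fin 3)).card = 1 by decide, R1, Finset.sum_singleton] at h
    exact h
  have K2 : u 0 ⬝ᵥ (M *ᵥ v 0) + u 1 ⬝ᵥ (M *ᵥ v 1) ≤ S 0 + S 1 := by
    have h := hK {0, 1}
    rw [show ({0, 1} : Finset (Fin 3)).card = 2 by decide, R2,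
      show ({0, 1} : Finset (Fin 3)) = insert 0 {1} from rfl,
      Finset.sum_insert (by decide), Finset.sum_singleton] at h
    exact h
  have K3 : u 0 ⬝ᵥ (M *ᵥ v 0) + u 1 ⬝ᵥ (M *ᵥ v 1) + u 2 ⬝ᵥ (M *ᵥ v 2)
      ≤ S 0 + S 1 + S 2 := by
    have h := hK Finset.univ
    rw [show (Finset.univ : Finset (Fin 3)).card = 3 by decide, R3,
      show (Finset.univ : Finset (Fin 3)) = {0, 1, 2} by decide,
      show ({0, 1, 2} : Finset (Fin 3)) = insert 0 (insert 1 {2}) from rfl,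
      Finset.sum_insert (by decide), Finset.sum_insert (by decide),
      Finset.sum_singleton] at h
    linarith
  rw [Fin.sum_univ_three, Fin.sum_univ_three]
  have h01 : g 1 ≤ g 0 := hganti (by decide)
  have h12 : g 2 ≤ g 1 := hganti (by decide)
  nlinarith [mul_nonneg (sub_nonneg.2 h01) (sub_nonneg.2 K1),
    mul_nonneg (sub_nonneg.2 h12) (sub_nonneg.2 K2),
    mul_nonneg (hgnn 2) (sub_nonneg.2 K3)]

/-- If `f : ℝ³ → ℝ` is convex, nondecreasing in each coordinate and permutation-invariant,
then for `F = t F₁ + (1-t) F₂` the value of `f` at the ordered singular values of `F` is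
bounded by its value at the convex combination of the ordered singular values of `F₁, F₂`. -/
theorem singularValues_convex_combination
    (f : (Fin 3 → ℝ) → ℝ)
    (hconv : ConvexOn ℝ Set.univ f)
    (hmono : ∀ x y : Fin 3 → ℝ, (∀ i, x i ≤ y i) → f x ≤ f y)
    (hperm : ∀ (σ : Equiv.Perm (Fin 3)) (x : Fin 3 → ℝ), f (x ∘ σ) = f x)
    (F₁ F₂ : Matrix (Fin 3) (Fin 3) ℝ) (t : ℝ) (ht0 : 0 ≤ t) (ht1 : t ≤ 1) :
    f (singularValues (t • F₁ + (1 - t) • F₂)) ≤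
      f (t • singularValues F₁ + (1 - t) • singularValues F₂) := by
  classical
  set F := t • F₁ + (1 - t) • F₂ with hF
  set x₀ := singularValues F with hx₀
  set y := t • singularValues F₁ + (1 - t) • singularValues F₂ with hy
  obtain ⟨g, hgsub⟩ := exists_subgradient f hconv x₀
  -- g is nonnegative
  have hgnn : ∀ i, 0 ≤ g i := by
    intro i
    have hle : f (x₀ - Pi.single i 1) ≤ f x₀ := by
      apply hmono
      intro m
      simp only [Pi.sub_apply, Pi.single_apply]
      by_cases h : m = i <;> simp [h]
    have h2 := hgsub (x₀ - Pi.single i 1)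
    have h3 : (x₀ - Pi.single i 1) - x₀ = -Pi.single i 1 := by
      funext m; simp
    rw [h3] at h2
    have h4 : g ⬝ᵥ (-Pi.single i 1) = -g i := by
      rw [dotProduct_neg, dotProduct_single, mul_one]
    rw [h4] at h2
    linarith
  -- sorted version of g
  set τ : Equiv.Perm (Fin 3) := Fin.revPerm.trans (Tuple.sort g) with hτ
  set g' : Fin 3 → ℝ := g ∘ τ with hg'
  have hg'anti : Antitone g' := by
    intro k l hkl
    have := Tuple.monotone_sort g (by simpa [Fin.rev_le_rev] using hkl :
      Fin.rev l ≤ Fin.rev k)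
    simpa [hg', hτ, Function.comp] using this
  have hg'nn : ∀ i, 0 ≤ g' i := fun i => hgnn _
  have hx₀anti : Antitone x₀ := sv_antitone F
  -- rearrangement : g ⬝ᵥ x₀ ≤ g' ⬝ᵥ x₀
  have hrearr : g ⬝ᵥ x₀ ≤ g' ⬝ᵥ x₀ := by
    have hmv : Monovary x₀ g' := by
      intro i j hij
      by_contra hc
      push_neg at hc
      have : i ≤ j → g' j ≤ g' i := fun h => hg'anti h
      rcases le_total i j with h | h
      · exact absurd (this h) (not_le.2 hij)
      · exact absurd (hx₀anti h) (not_le.2 hc)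
    have := hmv.sum_smul_comp_perm_le_sum_smul (σ := τ⁻¹)
    calc g ⬝ᵥ x₀ = ∑ i, x₀ i • g' (τ⁻¹ i) := by
          rw [dotProduct]
          apply Finset.sum_congr rfl
          intro i _
          simp [hg', smul_eq_mul, mul_comm]
      _ ≤ ∑ i, x₀ i • g' i := this
      _ = g' ⬝ᵥ x₀ := by
          rw [dotProduct]
          apply Finset.sum_congr rfl
          intro i _
          simp [smul_eq_mul, mul_comm]
  -- modified subgradient inequality for g'
  have hg'sub : ∀ z, f x₀ + g' ⬝ᵥ z - g' ⬝ᵥ x₀ ≤ f z := by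
    intro z
    have h1 := hgsub (z ∘ ⇑τ⁻¹)
    have h2 : f ((z ∘ ⇑τ⁻¹)) = f z := by
      have h3 := hperm τ (z ∘ ⇑τ⁻¹)
      have h4 : (z ∘ ⇑τ⁻¹) ∘ ⇑τ = z := by
        funext i; simp
      rw [h4] at h3
      exact h3.symm
    rw [dotProduct_sub] at h1
    have h5 : g ⬝ᵥ (z ∘ ⇑τ⁻¹) = g' ⬝ᵥ z := by
      rw [dotProduct, dotProduct]
      rw [← Equiv.sum_comp τ (fun i => g i * (z ∘ ⇑τ⁻¹) i)]
      apply Finset.sum_congr rfl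
      intro i _
      simp [hg']
    rw [h5, h2] at h1
    linarith [hrearr]
  -- Ky Fan inequality
  obtain ⟨p, q, hq, hp1, hp0, hFq, hach⟩ := svd_data F
  have hqv1 : ∀ i, q i ⬝ᵥ q i ≤ 1 := fun i => le_of_eq (by simpa using hq i i)
  have hqv0 : ∀ i l, i ≠ l → q i ⬝ᵥ q l = 0 := fun i l h => by simpa [h] using hq i l
  have hsplit : ∀ i, p i ⬝ᵥ (F *ᵥ q i)
      = t * (p i ⬝ᵥ (F₁ *ᵥ q i)) + (1 - t) * (p i ⬝ᵥ (F₂ *ᵥ q i)) := by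
    intro i
    rw [hF, Matrix.add_mulVec, Matrix.smul_mulVec, Matrix.smul_mulVec,
      dotProduct_add, dotProduct_smul, dotProduct_smul]
    simp [smul_eq_mul]
  have hkey : g' ⬝ᵥ x₀ ≤ t * (g' ⬝ᵥ singularValues F₁) + (1 - t) * (g' ⬝ᵥ singularValues F₂) := by
    have e1 : g' ⬝ᵥ x₀ = ∑ i : Fin 3, g' i * (p i ⬝ᵥ (F *ᵥ q i)) := by
      rw [dotProduct]
      exact Finset.sum_congr rfl fun i _ => by rw [hach i]
    have e2 : g' ⬝ᵥ x₀ = t * (∑ i : Fin 3, g' i * (p i ⬝ᵥ (F₁ *ᵥ q i)))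
        + (1 - t) * (∑ i : Fin 3, g' i * (p i ⬝ᵥ (F₂ *ᵥ q i))) := by
      rw [e1, Finset.mul_sum, Finset.mul_sum, ← Finset.sum_add_distrib]
      apply Finset.sum_congr rfl
      intro i _
      rw [hsplit i]
      ring
    have w1 := weighted_vonNeumann F₁ p q hp1 hp0 hqv1 hqv0 g' hg'anti hg'nn
    have w2 := weighted_vonNeumann F₂ p q hp1 hp0 hqv1 hqv0 g' hg'anti hg'nn
    have d1 : g' ⬝ᵥ singularValues F₁ = ∑ i : Fin 3, g' i * singularValues F₁ i := rfl
    have d2 : g' ⬝ᵥ singularValues F₂ = ∑ i : Fin 3, g' i * singularValues F₂ i := rfl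
    rw [e2, d1, d2]
    have ht1' : 0 ≤ 1 - t := by linarith
    exact add_le_add (mul_le_mul_of_nonneg_left w1 ht0) (mul_le_mul_of_nonneg_left w2 ht1')
  -- conclude
  have hdoty : g' ⬝ᵥ y = t * (g' ⬝ᵥ singularValues F₁) + (1 - t) * (g' ⬝ᵥ singularValues F₂) := by
    rw [hy, dotProduct_add, dotProduct_smul, dotProduct_smul]
    simp [smul_eq_mul]
  have := hg'sub y
  rw [hdoty] at this
  linarith [hkey]
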